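/- Let c > a and b > d (anti-coordination game). Let φ : ℝ → ℝ be continuously differentiable with φ(x) > 0 for all x ∈ (0,1] and such that there exist constants h > 0 and k > 0 with φ(x)/x^h → k as x → 0⁺. Then every solution (x, g) of the conformity-gain controlled replicator equation with x(0) ∈ [0,1) and g(0) > 0 satisfies x(t) → 0 as t → ∞ and g(t) → ḡ as t → ∞ for some constant ḡ > 0. -/

import Mathlib

/-- `(x, g)` is a solution of the conformity-gain controlled replicator equation
(control matrix `G⁽⁴⁾`): `ẋ = x(1−x)((a+d−b−c)x + b − d − g(1−x))`, `ġ = φ(x) g`. -/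
def IsConformitySolution (a b c d : ℝ) (φ : ℝ → ℝ) (x g : ℝ → ℝ) : Prop :=
  ∀ t : ℝ, 0 ≤ t →
    HasDerivAt x
      (x t * (1 - x t) * ((a + d - b - c) * x t + (b - d) - g t * (1 - x t))) t ∧
    HasDerivAt g (φ (x t) * g t) t

/-!
Since `ġ = φ(x) g ≥ 0`, the gain is nondecreasing. It is also bounded: once `g ≥ b - d + 1` the
payoff gap of the first strategy is at most `-min (c - a) 1`, so `x` decays exponentially, hence
so does `φ(x) ≤ K x^h`, and `log g`, whose derivative is `φ(x)`, stays bounded. So `g` converges to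
some `ḡ ≥ g(0) > 0`. Then `φ ∘ x` is uniformly continuous and has the convergent antiderivative
`log g`, so it tends to `0` by Barbalat's lemma; as `φ > 0` on `(0, 1]`, this forces `x → 0`.
-/

open Set Filter Topology Real

section Calculus

variable {f f' : ℝ → ℝ} {a : ℝ}

lemma antitoneOn_Ici_of_hasDerivAt_nonpos (hf : ∀ t ≥ a, HasDerivAt f (f' t) t)
    (hf' : ∀ t ≥ a, f' t ≤ 0) : AntitoneOn f (Ici a) := by
  refine antitoneOn_of_hasDerivWithinAt_nonpos (f' := f') (convex_Ici a)
    (fun t ht => (hf t ht).continuousAt.continuousWithinAt) (fun t ht => ?_) (fun t ht => ?_) <;>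
  rw [interior_Ici] at ht
  · exact (hf t ht.le).hasDerivWithinAt
  · exact hf' t ht.le

lemma le_mul_exp_of_hasDerivAt_le_mul {K : ℝ} (hf : ∀ t ≥ a, HasDerivAt f (f' t) t)
    (hK : ∀ t ≥ a, f' t ≤ K * f t) {t : ℝ} (ht : a ≤ t) :
    f t ≤ f a * exp (K * (t - a)) := by
  have hanti : AntitoneOn (fun s => f s * exp (-K * (s - a))) (Ici a) := by
    refine antitoneOn_Ici_of_hasDerivAt_nonpos
      (fun s hs => (hf s hs).mul (((hasDerivAt_id' s).sub_const a).const_mul (-K)).exp)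
      (fun s hs => ?_)
    have hexp : f' s * exp (-K * (s - a)) + f s * (exp (-K * (s - a)) * (-K * 1))
        = (f' s - K * f s) * exp (-K * (s - a)) := by ring
    rw [hexp]
    exact mul_nonpos_of_nonpos_of_nonneg (by linarith [hK s hs]) (exp_nonneg _)
  have hle : f t * exp (-K * (t - a)) ≤ f a := by
    simpa using hanti self_mem_Ici ht ht
  calc f t = f t * exp (-K * (t - a)) * exp (K * (t - a)) := by
        rw [mul_assoc, ← exp_add, neg_mul, neg_add_cancel, exp_zero, mul_one]
    _ ≤ f a * exp (K * (t - a)) := mul_le_mul_of_nonneg_right hle (exp_nonneg _)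

lemma le_add_div_of_hasDerivAt_le_mul_exp {C r : ℝ} (hC : 0 ≤ C) (hr : 0 < r)
    (hf : ∀ t ≥ a, HasDerivAt f (f' t) t) (hbound : ∀ t ≥ a, f' t ≤ C * exp (-r * (t - a)))
    {t : ℝ} (ht : a ≤ t) : f t ≤ f a + C / r := by
  have hanti : AntitoneOn (fun s => f s + C / r * exp (-r * (s - a))) (Ici a) := by
    refine antitoneOn_Ici_of_hasDerivAt_nonpos
      (fun s hs => (hf s hs).add
        ((((hasDerivAt_id' s).sub_const a).const_mul (-r)).exp.const_mul (C / r)))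
      (fun s hs => ?_)
    have hexp : C / r * (exp (-r * (s - a)) * (-r * 1)) = -(C * exp (-r * (s - a))) := by
      field_simp
    linarith [hbound s hs]
  have hle := hanti self_mem_Ici ht ht
  simp only [sub_self, mul_zero, exp_zero, mul_one] at hle
  nlinarith [exp_pos (-r * (t - a)), div_nonneg hC hr.le]

lemma eq_mul_exp_integral_of_hasDerivAt {q : ℝ → ℝ} (hq : ContinuousOn q (Ici a))
    (hf : ∀ t ≥ a, HasDerivAt f (q t * f t) t) {t : ℝ} (ht : a ≤ t) :
    f t = f a * exp (∫ s in a..t, q s) := by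
  -- `q` is only continuous on `[a, ∞)`; integrate its constant extension to the left instead.
  set qe : ℝ → ℝ := fun s => q (max a s)
  have hqe : Continuous qe := hq.comp_continuous (continuous_const.max continuous_id)
    fun s => le_max_left a s
  have hqe_eq : ∀ s ≥ a, qe s = q s := fun s hs => by simp [qe, max_eq_right hs]
  set F : ℝ → ℝ := fun s => f s * exp (-∫ u in a..s, qe u)
  have hF : ∀ s ≥ a, HasDerivAt F 0 s := fun s hs => by
    have h := (hf s hs).mul (hqe.integral_hasStrictDerivAt a s).hasDerivAt.neg.exp
    rw [hqe_eq s hs] at h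
    exact h.congr_deriv (by ring)
  have hconst : F t = F a := constant_of_has_deriv_right_zero
    (fun s hs => (hF s hs.1).continuousAt.continuousWithinAt)
    (fun s hs => (hF s hs.1).hasDerivWithinAt) t ⟨ht, le_rfl⟩
  have hint : ∫ s in a..t, qe s = ∫ s in a..t, q s :=
    intervalIntegral.integral_congr fun s hs => hqe_eq s (by rw [uIcc_of_le ht] at hs; exact hs.1)
  simp only [F, intervalIntegral.integral_same, neg_zero, exp_zero, mul_one] at hconst
  rw [← hint, ← hconst, mul_assoc, ← exp_add, neg_add_cancel, exp_zero, mul_one]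

end Calculus

section Limits

lemma eq_zero_of_tendsto_div_rpow {φ : ℝ → ℝ} {h k : ℝ} (hφ : ContinuousWithinAt φ (Ioi 0) 0)
    (hh : 0 < h) (hlim : Tendsto (fun y => φ y / y ^ h) (𝓝[>] 0) (𝓝 k)) : φ 0 = 0 := by
  have hpow : Tendsto (fun y : ℝ => y ^ h) (𝓝[>] 0) (𝓝 0) := by
    simpa [zero_rpow hh.ne'] using
      (continuousAt_rpow_const 0 h (Or.inr hh.le)).tendsto.mono_left nhdsWithin_le_nhds
  refine tendsto_nhds_unique hφ ?_
  simpa using (hlim.mul hpow).congr' <| eventually_nhdsWithin_of_forall fun y (hy : y ∈ Ioi 0) =>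
    div_mul_cancel₀ (φ y) (rpow_pos_of_pos hy h).ne'

lemma exists_le_mul_rpow_of_tendsto_div_rpow {φ : ℝ → ℝ} {h k : ℝ}
    (hφ : ContinuousOn φ (Icc 0 1)) (hh : 0 < h)
    (hlim : Tendsto (fun y => φ y / y ^ h) (𝓝[>] 0) (𝓝 k)) :
    ∃ K, 0 ≤ K ∧ ∀ y ∈ Icc (0 : ℝ) 1, φ y ≤ K * y ^ h := by
  have hφ0 : φ 0 = 0 := eq_zero_of_tendsto_div_rpow
    ((hφ 0 ⟨le_rfl, zero_le_one⟩).mono_of_mem_nhdsWithin (Icc_mem_nhdsGT one_pos)) hh hlim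
  obtain ⟨δ, hδ, hsmall⟩ := mem_nhdsGT_iff_exists_Ioo_subset.mp
    (hlim.eventually (gt_mem_nhds (lt_add_one k)))
  obtain ⟨M, hM⟩ := (isCompact_Icc.bddAbove_image (hφ.mono (Icc_subset_Icc_left hδ.le)))
  have hδh : 0 < δ ^ h := rpow_pos_of_pos hδ h
  refine ⟨max (k + 1) (max M 0 / δ ^ h), le_max_of_le_right (by positivity),
    fun y ⟨hy0, hy1⟩ => ?_⟩
  rcases hy0.eq_or_lt with rfl | hy0
  · simp [hφ0, zero_rpow hh.ne']
  have hyh : 0 < y ^ h := rpow_pos_of_pos hy0 h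
  rcases lt_or_ge y δ with hyδ | hδy
  · have : φ y / y ^ h < k + 1 := hsmall ⟨hy0, hyδ⟩
    rw [div_lt_iff₀ hyh] at this
    nlinarith [le_max_left (k + 1) (max M 0 / δ ^ h)]
  · calc φ y ≤ max M 0 := (hM ⟨y, ⟨hδy, hy1⟩, rfl⟩).trans (le_max_left M 0)
      _ = max M 0 / δ ^ h * δ ^ h := (div_mul_cancel₀ _ hδh.ne').symm
      _ ≤ max M 0 / δ ^ h * y ^ h := by gcongr; exact hδ.le
      _ ≤ _ := by gcongr; exact le_max_right _ _

lemma tendsto_atTop_csSup_of_monotoneOn_Ici {g : ℝ → ℝ} {a : ℝ} (hg : MonotoneOn g (Ici a))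
    (hb : BddAbove (g '' Ici a)) : Tendsto g atTop (𝓝 (sSup (g '' Ici a))) := by
  refine tendsto_order.2 ⟨fun l hl => ?_, fun u hu => ?_⟩
  · obtain ⟨_, ⟨s, hs, rfl⟩, hls⟩ := exists_lt_of_lt_csSup (nonempty_Ici.image g) hl
    filter_upwards [eventually_ge_atTop s] with t hst
    exact hls.trans_le (hg hs (le_trans hs hst) hst)
  · filter_upwards [eventually_ge_atTop a] with t hat
    exact (le_csSup hb (mem_image_of_mem g hat)).trans_lt hu

/-- Barbalat's lemma. -/
lemma tendsto_zero_of_uniformContinuousOn_of_hasDerivAt {F f : ℝ → ℝ} {a L : ℝ}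
    (hF : ∀ t ≥ a, HasDerivAt F (f t) t) (hFL : Tendsto F atTop (𝓝 L))
    (hf : UniformContinuousOn f (Ici a)) : Tendsto f atTop (𝓝 0) := by
  refine Metric.tendsto_atTop.2 fun ε hε => ?_
  obtain ⟨δ, hδ, hfδ⟩ := Metric.uniformContinuousOn_iff.1 hf (ε / 2) (half_pos hε)
  have hincr : Tendsto (fun t => F (t + δ / 2) - F t) atTop (𝓝 0) := by
    simpa using (hFL.comp (tendsto_atTop_add_const_right _ (δ / 2) tendsto_id)).sub hFL
  obtain ⟨N, hN⟩ := Metric.tendsto_atTop.1 hincr (δ / 2 * (ε / 2)) (by positivity)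
  refine ⟨max N a, fun t ht => ?_⟩
  have hat : a ≤ t := le_of_max_le_right ht
  obtain ⟨ξ, ⟨htξ, hξt⟩, hslope⟩ := exists_hasDerivAt_eq_slope F f
    (lt_add_of_pos_right t (half_pos hδ))
    (fun s hs => (hF s (hat.trans hs.1)).continuousAt.continuousWithinAt)
    (fun s hs => hF s (hat.trans hs.1.le))
  have hfξ : |f ξ| < ε / 2 := by
    have := hN t (le_of_max_le_left ht)
    rw [Real.dist_eq, sub_zero] at this
    rw [hslope, add_sub_cancel_left, abs_div, abs_of_pos (half_pos hδ), div_lt_iff₀ (half_pos hδ)]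
    linarith
  have hfξt : dist (f t) (f ξ) < ε / 2 :=
    hfδ t hat ξ (hat.trans htξ.le) (by rw [Real.dist_eq, abs_lt]; constructor <;> linarith)
  rw [Real.dist_eq] at hfξt
  rw [Real.dist_eq, sub_zero]
  linarith [abs_sub_abs_le_abs_sub (f t) (f ξ)]

lemma tendsto_zero_of_tendsto_comp_of_pos {α : Type*} {l : Filter α} {φ : ℝ → ℝ} {u : α → ℝ}
    (hφ : ContinuousOn φ (Ioc 0 1)) (hpos : ∀ y ∈ Ioc (0 : ℝ) 1, 0 < φ y)
    (hu : ∀ᶠ t in l, u t ∈ Icc (0 : ℝ) 1) (h : Tendsto (fun t => φ (u t)) l (𝓝 0)) :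
    Tendsto u l (𝓝 0) := by
  refine tendsto_order.2 ⟨fun l' hl' => hu.mono fun t ht => hl'.trans_le ht.1, fun ε hε => ?_⟩
  have hε₁ : 0 < min ε 1 := lt_min hε one_pos
  obtain ⟨y₀, hy₀, hmin⟩ := isCompact_Icc.exists_isMinOn (nonempty_Icc.2 (min_le_right ε 1))
    (hφ.mono fun y hy => ⟨hε₁.trans_le hy.1, hy.2⟩)
  filter_upwards [hu, h.eventually (gt_mem_nhds (hpos y₀ ⟨hε₁.trans_le hy₀.1, hy₀.2⟩))]
    with t ht hφt
  by_contra! hεt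
  exact (hmin ⟨(min_le_left ε 1).trans hεt, ht.2⟩).not_gt hφt

end Limits

lemma payoff_gap_le_neg_min {a b c d γ y : ℝ} (hγ : b - d + 1 ≤ γ) (hy0 : 0 ≤ y)
    (hy1 : y ≤ 1) : (a + d - b - c) * y + (b - d) - γ * (1 - y) ≤ -min (c - a) 1 := by
  -- the gap is `(a - c) y + (b - d - γ) (1 - y)`, a convex combination of `a - c` and `b - d - γ`
  have h1 : min (c - a) 1 ≤ c - a := min_le_left _ _
  have h2 : min (c - a) 1 ≤ 1 := min_le_right _ _
  nlinarith [mul_le_mul_of_nonneg_right h1 hy0, mul_le_mul_of_nonneg_right h2 (sub_nonneg.2 hy1)]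

lemma abs_replicator_le {a b c d γ y G : ℝ} (hy : y ∈ Icc (0 : ℝ) 1) (hγ : γ ∈ Icc 0 G) :
    |y * (1 - y) * ((a + d - b - c) * y + (b - d) - γ * (1 - y))| ≤
      |a + d - b - c| + |b - d| + G := by
  obtain ⟨hy0, hy1⟩ := hy
  obtain ⟨hγ0, hγG⟩ := hγ
  have hyy : |y * (1 - y)| ≤ 1 := by
    rw [abs_of_nonneg (mul_nonneg hy0 (sub_nonneg.2 hy1))]; nlinarith
  have hgap : |(a + d - b - c) * y + (b - d) - γ * (1 - y)| ≤ |a + d - b - c| + |b - d| + G := by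
    rw [abs_le]
    constructor <;>
    nlinarith [abs_nonneg (a + d - b - c), neg_abs_le (a + d - b - c), le_abs_self (a + d - b - c),
      neg_abs_le (b - d), le_abs_self (b - d), mul_nonneg hγ0 hy0]
  rw [abs_mul]
  exact (mul_le_mul hyy hgap (abs_nonneg _) zero_le_one).trans_eq (one_mul _)

namespace IsConformitySolution

variable {a b c d : ℝ} {φ x g : ℝ → ℝ}

lemma continuousOn_x (hsol : IsConformitySolution a b c d φ x g) : ContinuousOn x (Ici 0) :=
  fun t ht => (hsol t ht).1.continuousAt.continuousWithinAt

lemma continuousOn_g (hsol : IsConformitySolution a b c d φ x g) : ContinuousOn g (Ici 0) :=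
  fun t ht => (hsol t ht).2.continuousAt.continuousWithinAt

lemma mem_Ico (hsol : IsConformitySolution a b c d φ x g) (hx0 : x 0 ∈ Ico (0 : ℝ) 1) {t : ℝ}
    (ht : 0 ≤ t) : x t ∈ Ico (0 : ℝ) 1 := by
  have hxc := hsol.continuousOn_x
  have hgc := hsol.continuousOn_g
  have hx : x t = x 0 * exp (∫ s in (0 : ℝ)..t,
      (1 - x s) * ((a + d - b - c) * x s + (b - d) - g s * (1 - x s))) :=
    eq_mul_exp_integral_of_hasDerivAt (by fun_prop)
      (fun s hs => (hsol s hs).1.congr_deriv (by ring)) ht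
  have hy : 1 - x t = (1 - x 0) * exp (∫ s in (0 : ℝ)..t,
      -(x s * ((a + d - b - c) * x s + (b - d) - g s * (1 - x s)))) :=
    eq_mul_exp_integral_of_hasDerivAt (f := fun s => 1 - x s) (by fun_prop)
      (fun s hs => ((hsol s hs).1.const_sub 1).congr_deriv (by ring)) ht
  refine ⟨hx ▸ mul_nonneg hx0.1 (exp_pos _).le, sub_pos.1 ?_⟩
  exact hy ▸ mul_pos (sub_pos.2 hx0.2) (exp_pos _)

lemma g_pos (hsol : IsConformitySolution a b c d φ x g) (hφ : Continuous φ) (hg0 : 0 < g 0)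
    {t : ℝ} (ht : 0 ≤ t) : 0 < g t := by
  rw [eq_mul_exp_integral_of_hasDerivAt (q := fun s => φ (x s))
    (hφ.comp_continuousOn hsol.continuousOn_x) (fun s hs => (hsol s hs).2) ht]
  positivity

lemma hasDerivAt_log_g (hsol : IsConformitySolution a b c d φ x g) {t : ℝ} (ht : 0 ≤ t)
    (hg : 0 < g t) : HasDerivAt (fun s => log (g s)) (φ (x t)) t :=
  ((hsol t ht).2.log hg.ne').congr_deriv (mul_div_cancel_right₀ _ hg.ne')

lemma monotoneOn_g (hsol : IsConformitySolution a b c d φ x g) (hφ : ∀ t ≥ 0, 0 ≤ φ (x t))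
    (hg : ∀ t ≥ 0, 0 < g t) : MonotoneOn g (Ici 0) := by
  refine monotoneOn_of_hasDerivWithinAt_nonneg (f' := fun t => φ (x t) * g t) (convex_Ici 0)
    hsol.continuousOn_g (fun t ht => ?_) (fun t ht => ?_) <;>
  rw [interior_Ici] at ht
  · exact (hsol t ht.le).2.hasDerivWithinAt
  · exact mul_nonneg (hφ t ht.le) (hg t ht.le).le

lemma x_le_mul_exp (hsol : IsConformitySolution a b c d φ x g) (hca : a < c)
    (hx : ∀ t ≥ 0, x t ∈ Ico (0 : ℝ) 1) (hg : MonotoneOn g (Ici 0)) {t₀ : ℝ} (ht₀ : 0 ≤ t₀)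
    (hgt₀ : b - d + 1 ≤ g t₀) {t : ℝ} (ht : t₀ ≤ t) :
    x t ≤ x t₀ * exp (-(min (c - a) 1 * (1 - x t₀)) * (t - t₀)) := by
  set m := min (c - a) 1
  have hderiv : ∀ s ≥ t₀, HasDerivAt x
      (x s * (1 - x s) * ((a + d - b - c) * x s + (b - d) - g s * (1 - x s))) s :=
    fun s hs => (hsol s (ht₀.trans hs)).1
  have hgap : ∀ s ≥ t₀, (a + d - b - c) * x s + (b - d) - g s * (1 - x s) ≤ -m := fun s hs =>
    payoff_gap_le_neg_min (hgt₀.trans (hg ht₀ (ht₀.trans hs) hs)) (hx s (ht₀.trans hs)).1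
      (hx s (ht₀.trans hs)).2.le
  have hxx : ∀ s ≥ t₀, 0 ≤ x s * (1 - x s) := fun s hs =>
    mul_nonneg (hx s (ht₀.trans hs)).1 (sub_nonneg.2 (hx s (ht₀.trans hs)).2.le)
  have hm : 0 ≤ m := le_min (sub_nonneg.2 hca.le) zero_le_one
  have hdecr : ∀ s ≥ t₀, x s ≤ x t₀ := fun s hs => by
    simpa using le_mul_exp_of_hasDerivAt_le_mul (K := 0) hderiv (fun s hs => by
      rw [zero_mul]
      exact mul_nonpos_of_nonneg_of_nonpos (hxx s hs) ((hgap s hs).trans (neg_nonpos.2 hm))) hs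
  refine le_mul_exp_of_hasDerivAt_le_mul hderiv (fun s hs => ?_) ht
  nlinarith [mul_le_mul_of_nonneg_left (hgap s hs) (hxx s hs), hdecr s hs,
    mul_nonneg hm (hx s (ht₀.trans hs)).1]

lemma bddAbove_g (hsol : IsConformitySolution a b c d φ x g) (hca : a < c)
    (hx : ∀ t ≥ 0, x t ∈ Ico (0 : ℝ) 1) (hg : ∀ t ≥ 0, 0 < g t) (hmono : MonotoneOn g (Ici 0))
    {h K : ℝ} (hh : 0 < h) (hK : 0 ≤ K) (hφK : ∀ y ∈ Icc (0 : ℝ) 1, φ y ≤ K * y ^ h) :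
    BddAbove (g '' Ici 0) := by
  by_cases hlarge : ∃ t₀ ≥ 0, b - d + 1 ≤ g t₀
  swap
  · push Not at hlarge
    exact ⟨b - d + 1, forall_mem_image.2 fun t ht => (hlarge t ht).le⟩
  obtain ⟨t₀, ht₀, hgt₀⟩ := hlarge
  set r := min (c - a) 1 * (1 - x t₀)
  have hr : 0 < r := mul_pos (lt_min (sub_pos.2 hca) one_pos) (sub_pos.2 (hx t₀ ht₀).2)
  have hC : 0 ≤ K * x t₀ ^ h := mul_nonneg hK (rpow_nonneg (hx t₀ ht₀).1 h)
  have hφx : ∀ s ≥ t₀, φ (x s) ≤ K * x t₀ ^ h * exp (-(r * h) * (s - t₀)) := fun s hs => by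
    have hxs := hx s (ht₀.trans hs)
    calc φ (x s) ≤ K * x s ^ h := hφK _ ⟨hxs.1, hxs.2.le⟩
      _ ≤ K * (x t₀ * exp (-r * (s - t₀))) ^ h := by
        gcongr
        · exact hxs.1
        · exact hsol.x_le_mul_exp hca hx hmono ht₀ hgt₀ hs
      _ = K * x t₀ ^ h * exp (-(r * h) * (s - t₀)) := by
        rw [mul_rpow (hx t₀ ht₀).1 (exp_nonneg _), ← exp_mul, mul_assoc]
        ring_nf
  have hlog : ∀ t ≥ t₀, log (g t) ≤ log (g t₀) + K * x t₀ ^ h / (r * h) := fun t ht =>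
    le_add_div_of_hasDerivAt_le_mul_exp hC (mul_pos hr hh)
      (fun s hs => hsol.hasDerivAt_log_g (ht₀.trans hs) (hg s (ht₀.trans hs))) hφx ht
  refine ⟨exp (log (g t₀) + K * x t₀ ^ h / (r * h)), forall_mem_image.2 fun t ht => ?_⟩
  rcases le_total t t₀ with htt₀ | htt₀
  · calc g t ≤ g t₀ := hmono ht ht₀ htt₀
      _ = exp (log (g t₀)) := (exp_log (hg t₀ ht₀)).symm
      _ ≤ _ := exp_le_exp.2 (le_add_of_nonneg_right (div_nonneg hC (mul_pos hr hh).le))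
  · rw [← exp_log (hg t ht)]
    exact exp_le_exp.2 (hlog t htt₀)

lemma uniformContinuousOn_x (hsol : IsConformitySolution a b c d φ x g)
    (hx : ∀ t ≥ 0, x t ∈ Icc (0 : ℝ) 1) {G : ℝ} (hg : ∀ t ≥ 0, g t ∈ Icc 0 G) :
    UniformContinuousOn x (Ici 0) := by
  have hM : 0 ≤ |a + d - b - c| + |b - d| + G := by
    linarith [abs_nonneg (a + d - b - c), abs_nonneg (b - d), (hg 0 le_rfl).1.trans (hg 0 le_rfl).2]
  refine ((convex_Ici 0).lipschitzOnWith_of_nnnorm_hasDerivWithin_le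
    (C := (|a + d - b - c| + |b - d| + G).toNNReal) (fun t ht => (hsol t ht).1.hasDerivWithinAt)
    (fun t ht => ?_)).uniformContinuousOn
  rw [← NNReal.coe_le_coe, coe_nnnorm, Real.coe_toNNReal _ hM, Real.norm_eq_abs]
  exact abs_replicator_le (hx t ht) (hg t ht)

end IsConformitySolution

theorem consensus_stabilization_anticoordination_general (a b c d : ℝ) (hca : c > a)
    (φ : ℝ → ℝ) (hφ : ContDiff ℝ 1 φ)
    (h1 : ∀ y : ℝ, 0 < y → y ≤ 1 → 0 < φ y)
    (h2 : ∃ h k : ℝ, 0 < h ∧ 0 < k ∧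
      Filter.Tendsto (fun y : ℝ => φ y / y ^ h) (nhdsWithin 0 (Set.Ioi 0)) (nhds k))
    (x g : ℝ → ℝ) (hsol : IsConformitySolution a b c d φ x g)
    (hx0 : x 0 ∈ Set.Ico (0 : ℝ) 1) (hg0 : 0 < g 0) :
    Filter.Tendsto x Filter.atTop (nhds 0) ∧
    ∃ gbar : ℝ, 0 < gbar ∧ Filter.Tendsto g Filter.atTop (nhds gbar) := by
  obtain ⟨h, k, hh, -, hlim⟩ := h2
  have hφc : Continuous φ := hφ.continuous
  have hx : ∀ t ≥ 0, x t ∈ Ico (0 : ℝ) 1 := fun t => hsol.mem_Ico hx0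
  have hxI : ∀ t ≥ 0, x t ∈ Icc (0 : ℝ) 1 := fun t ht => Ico_subset_Icc_self (hx t ht)
  have hg : ∀ t ≥ 0, 0 < g t := fun t => hsol.g_pos hφc hg0
  have hφ0 : φ 0 = 0 := eq_zero_of_tendsto_div_rpow hφc.continuousWithinAt hh hlim
  have hφx : ∀ t ≥ 0, 0 ≤ φ (x t) := fun t ht => by
    rcases (hx t ht).1.eq_or_lt with hxt | hxt
    · rw [← hxt, hφ0]
    · exact (h1 _ hxt (hx t ht).2.le).le
  have hmono := hsol.monotoneOn_g hφx hg
  obtain ⟨K, hK, hφK⟩ := exists_le_mul_rpow_of_tendsto_div_rpow hφc.continuousOn hh hlim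
  have hbdd := hsol.bddAbove_g hca hx hg hmono hh hK hφK
  have hgG := tendsto_atTop_csSup_of_monotoneOn_Ici hmono hbdd
  have hgG' : ∀ t ≥ 0, g t ∈ Icc 0 (sSup (g '' Ici 0)) := fun t ht =>
    ⟨(hg t ht).le, le_csSup hbdd (mem_image_of_mem g ht)⟩
  have hG : 0 < sSup (g '' Ici 0) := hg0.trans_le (hgG' 0 le_rfl).2
  refine ⟨?_, _, hG, hgG⟩
  have hφx0 : Tendsto (fun t => φ (x t)) atTop (𝓝 0) :=
    tendsto_zero_of_uniformContinuousOn_of_hasDerivAt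
      (fun t ht => hsol.hasDerivAt_log_g ht (hg t ht)) (hgG.log hG.ne')
      ((isCompact_Icc.uniformContinuousOn_of_continuous hφc.continuousOn).comp
        (hsol.uniformContinuousOn_x hxI hgG') hxI)
  exact tendsto_zero_of_tendsto_comp_of_pos hφc.continuousOn (fun y hy => h1 y hy.1 hy.2)
    ((eventually_ge_atTop 0).mono hxI) hφx0

/-- Consensus stabilization via the conformity-gain controller in an anti-coordination
game (`c > a`, `b > d`). -/
theorem consensus_stabilization_anticoordination (a b c d : ℝ) (hca : c > a) (hbd : b > d)
    (φ : ℝ → ℝ) (hφ : ContDiff ℝ 1 φ)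
    (h1 : ∀ y : ℝ, 0 < y → y ≤ 1 → 0 < φ y)
    (h2 : ∃ h k : ℝ, 0 < h ∧ 0 < k ∧
      Filter.Tendsto (fun y : ℝ => φ y / y ^ h) (nhdsWithin 0 (Set.Ioi 0)) (nhds k))
    (x g : ℝ → ℝ) (hsol : IsConformitySolution a b c d φ x g)
    (hx0 : x 0 ∈ Set.Ico (0 : ℝ) 1) (hg0 : 0 < g 0) :
    Filter.Tendsto x Filter.atTop (nhds 0) ∧
    ∃ gbar : ℝ, 0 < gbar ∧ Filter.Tendsto g Filter.atTop (nhds gbar) :=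
  consensus_stabilization_anticoordination_general a b c d hca φ hφ h1 h2 x g hsol hx0 hg0
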